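/- If the tier structure t places exactly one school in each tier, then for every school choice problem, every school weakly prefers every Nash equilibrium outcome of the TDA mechanism under t to the student-optimal stable matching (under responsive school preferences extending priorities). -/

import Mathlib

set_option linter.unusedSectionVars false

namespace SchoolChoice

/-- A strict preference over `S ∪ {self}`, encoded by an injective ranking function on
`Option S`; `none` denotes being unmatched (the student himself), and a smaller rank
means more preferred. Injective rankings on a finite set are exactly strict linear orders. -/
structure Pref (S : Type) where
  rank : Option S → ℕ
  inj : Function.Injective rank

/-- Quotas together with strict priorities of the schools: `prank s` ranks the students
at school `s`, a smaller rank meaning higher priority. -/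
structure Prio (I S : Type) where
  quota : S → ℕ
  prank : S → I → ℕ
  inj : ∀ s, Function.Injective (prank s)

variable {I S : Type} [Fintype I] [Fintype S] [DecidableEq I] [DecidableEq S]

/-- `i` has strictly higher priority than `j` at school `s`. -/
def Prio.higher (E : Prio I S) (s : S) (i j : I) : Prop :=
  E.prank s i < E.prank s j

/-- A matching assigns to each student a school or himself (`none`). -/
abbrev Matching (I S : Type) := I → Option S

/-- The set of students assigned to school `s`. -/
def assigned (μ : Matching I S) (s : S) : Finset I :=
  Finset.univ.filter (fun i => μ i = some s)

/-- Quotas are respected. -/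
def Feasible (E : Prio I S) (μ : Matching I S) : Prop :=
  ∀ s, (assigned μ s).card ≤ E.quota s

/-- `(i, s)` is a blocking pair of `μ` with respect to preferences `R`:
`i` strictly prefers `s` to his assignment, and either `s` has an empty seat
(wastefulness) or some student assigned to `s` has lower priority than `i`
(justified envy). -/
def Blocks (E : Prio I S) (R : I → Pref S) (μ : Matching I S) (i : I) (s : S) : Prop :=
  (R i).rank (some s) < (R i).rank (μ i) ∧
    ((assigned μ s).card < E.quota s ∨ ∃ j, μ j = some s ∧ E.higher s i j)

/-- Individual rationality: every student weakly prefers his assignment to being unmatched. -/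
def IndivRat (R : I → Pref S) (μ : Matching I S) : Prop :=
  ∀ i, (R i).rank (μ i) ≤ (R i).rank none

/-- Non-wastefulness: no student prefers a school with an empty seat to his assignment. -/
def NonWasteful (E : Prio I S) (R : I → Pref S) (μ : Matching I S) : Prop :=
  ∀ i s, (R i).rank (some s) < (R i).rank (μ i) → E.quota s ≤ (assigned μ s).card

/-- Stability: feasible, individually rational, and no blocking pair
(no justified envy and non-wasteful). -/
def Stable (E : Prio I S) (R : I → Pref S) (μ : Matching I S) : Prop :=
  Feasible E μ ∧ IndivRat R μ ∧ ∀ i s, ¬ Blocks E R μ i s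

/-- The student-optimal stable matching for the (reported) preferences. -/
def StudentOptimal (E : Prio I S) (R : I → Pref S) (μ : Matching I S) : Prop :=
  Stable E R μ ∧ ∀ ν, Stable E R ν → ∀ i, (R i).rank (μ i) ≤ (R i).rank (ν i)

open Classical in
/-- The student-proposing deferred acceptance mechanism: by the Gale–Shapley theorem its
outcome is the (unique) student-optimal stable matching of the reported preferences. -/
noncomputable def DA (E : Prio I S) (R : I → Pref S) : Matching I S :=
  if h : ∃ μ, StudentOptimal E R μ then h.choose else fun _ => none

/-- A strict upper bound for the values of a ranking. -/
noncomputable def bnd (p : Pref S) : ℕ := (Finset.univ.sup p.rank) + 1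

lemma rank_lt_bnd (p : Pref S) (x : Option S) : p.rank x < bnd p :=
  Nat.lt_succ_of_le (Finset.le_sup (Finset.mem_univ x))

private lemma mul_add_lt {a K B r : ℕ} (ha : a ≤ K) (hr : r < B) :
    a * B + r < (K + 1) * B := by
  calc a * B + r < a * B + B := by omega
    _ = (a + 1) * B := by ring
    _ ≤ (K + 1) * B := Nat.mul_le_mul (by omega) le_rfl

/-- Is an alternative "inside the market" `A`?  `none` always is. -/
def goodB (A : S → Prop) [DecidablePred A] : Option S → Bool
  | none => true
  | some s => decide (A s)

/-- The preference truncated to the set of schools `A`: schools in `A` (and the outside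
option `none`) keep their relative order, while all schools outside `A` are pushed below
`none` (become unacceptable), keeping their relative order among themselves. -/
noncomputable def trunc (A : S → Prop) [DecidablePred A] (p : Pref S) : Pref S where
  rank x := (if goodB A x then 0 else bnd p) + p.rank x
  inj := by
    intro x y h
    by_cases hx : goodB A x <;> by_cases hy : goodB A y <;>
      simp only [hx, hy, if_true, if_false, Bool.false_eq_true, zero_add] at h
    · exact p.inj h
    · have := rank_lt_bnd p x; omega
    · have := rank_lt_bnd p y; omega
    · exact p.inj (by omega)

/-- The reshuffled preference with respect to a tier structure `t`: acceptable schools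
are grouped by tier in increasing tier order (keeping the original relative order within
each tier) above `none`, and all unacceptable schools are placed below `none`. -/
noncomputable def reshuffle (t : S → ℕ) (p : Pref S) : Pref S where
  rank x :=
    Option.elim x ((Finset.univ.sup t + 1) * bnd p)
      (fun s =>
        if p.rank (some s) < p.rank none then t s * bnd p + p.rank (some s)
        else (Finset.univ.sup t + 1) * bnd p + 1 + p.rank (some s))
  inj := by
    have hB : ∀ x, p.rank x < bnd p := rank_lt_bnd p
    have hK : ∀ s : S, t s ≤ Finset.univ.sup t := fun s => Finset.le_sup (Finset.mem_univ s)
    intro x y h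
    rcases x with _ | s <;> rcases y with _ | s' <;>
      simp only [Option.elim_none, Option.elim_some] at h
    · rfl
    · by_cases hy : p.rank (some s') < p.rank none <;> simp only [hy, if_true, if_false] at h
      · have := mul_add_lt (hK s') (hB (some s')); omega
      · omega
    · by_cases hx : p.rank (some s) < p.rank none <;> simp only [hx, if_true, if_false] at h
      · have := mul_add_lt (hK s) (hB (some s)); omega
      · omega
    · by_cases hx : p.rank (some s) < p.rank none <;>
        by_cases hy : p.rank (some s') < p.rank none <;>
        simp only [hx, hy, if_true, if_false] at h
      · have hts : t s = t s' := by
          rcases Nat.lt_trichotomy (t s) (t s') with h1 | h1 | h1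
          · have h2 : t s * bnd p + p.rank (some s) < t s' * bnd p + p.rank (some s') := by
              have h3 := mul_add_lt (a := t s) (K := t s' - 1) (B := bnd p) (by omega) (hB (some s))
              have h4 : (t s' - 1 + 1) * bnd p = t s' * bnd p := by congr 1; omega
              omega
            omega
          · exact h1
          · have h2 : t s' * bnd p + p.rank (some s') < t s * bnd p + p.rank (some s) := by
              have h3 := mul_add_lt (a := t s') (K := t s - 1) (B := bnd p) (by omega) (hB (some s'))
              have h4 : (t s - 1 + 1) * bnd p = t s * bnd p := by congr 1; omega
              omega
            omega
        rw [hts] at h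
        exact p.inj (by omega)
      · have := mul_add_lt (hK s) (hB (some s)); omega
      · have := mul_add_lt (hK s') (hB (some s')); omega
      · exact p.inj (by omega)

/-- A tier structure assigning each school a tier in `{1, …, T}`, each tier nonempty. -/
def IsTierStructure (t : S → ℕ) (T : ℕ) : Prop :=
  (∀ s, 1 ≤ t s ∧ t s ≤ T) ∧ ∀ k, 1 ≤ k → k ≤ T → ∃ s, t s = k

/-- Rounds `1, …, k` of the tiered deferred acceptance mechanism: in round `k` the
students left unmatched so far participate in the DA mechanism with their preferences
truncated to the tier-`k` schools (already matched students participate with nothing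
acceptable); students matched in earlier rounds keep their assignments. -/
noncomputable def TDAaux (E : Prio I S) (t : S → ℕ) (Q : I → Pref S) : ℕ → Matching I S
  | 0 => fun _ => none
  | k + 1 => fun i =>
      match TDAaux E t Q k i with
      | some s => some s
      | none =>
          DA E (fun j =>
            if TDAaux E t Q k j = none then trunc (fun s => t s = k + 1) (Q j)
            else trunc (fun _ => False) (Q j)) i

/-- The tiered deferred acceptance mechanism under tier structure `t`. -/
noncomputable def TDA (E : Prio I S) (t : S → ℕ) (Q : I → Pref S) : Matching I S :=
  TDAaux E t Q (Finset.univ.sup t)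

/-- `Q` is a (pure) Nash equilibrium of the preference revelation game induced by the
mechanism `f` when the true preferences are `R`: no student can obtain a school he truly
strictly prefers by unilaterally changing his report. -/
def NashEq (R : I → Pref S) (f : (I → Pref S) → Matching I S) (Q : I → Pref S) : Prop :=
  ∀ (i : I) (Qi' : Pref S),
    (R i).rank (f Q i) ≤ (R i).rank (f (Function.update Q i Qi') i)

/-- `μ` is a Nash equilibrium outcome of the revelation game induced by `f` at true
preferences `R`. -/
def NashOutcome (R : I → Pref S) (f : (I → Pref S) → Matching I S) (μ : Matching I S) : Prop :=
  ∃ Q, NashEq R f Q ∧ f Q = μ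

/-- The preference `p` is aligned with the tier structure `t`: a (weakly) more preferred
school always lies in a weakly earlier tier. -/
def AlignedPref (t : S → ℕ) (p : Pref S) : Prop :=
  ∀ s s' : S, p.rank (some s) ≤ p.rank (some s') → t s ≤ t s'

/-- `p` lists exactly the school in `o` (if any) as acceptable. -/
def OnlyAcceptable (p : Pref S) (o : Option S) : Prop :=
  ∀ s : S, (p.rank (some s) < p.rank none ↔ o = some s)

/-- An Ergin cycle of the priority structure among the schools in `A`. -/
def Cycle (E : Prio I S) (A : S → Prop) : Prop :=
  ∃ a b : S, A a ∧ A b ∧ a ≠ b ∧ ∃ i j k : I,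
    E.higher a i j ∧ E.higher a j k ∧ E.higher b k i ∧
    ∃ Ia Ib : Finset I, Disjoint Ia Ib ∧
      (∀ l ∈ Ia, l ≠ i ∧ l ≠ j ∧ l ≠ k ∧ E.higher a l j) ∧
      (∀ l ∈ Ib, l ≠ i ∧ l ≠ j ∧ l ≠ k ∧ E.higher b l i) ∧
      Ia.card = E.quota a - 1 ∧ Ib.card = E.quota b - 1

/-- Within-tier acyclicity of a generalized priority structure: no Ergin cycle among the
schools of any single tier. -/
def WithinTierAcyclic (E : Prio I S) (t : S → ℕ) : Prop :=
  ∀ k : ℕ, ¬ Cycle E (fun s => t s = k)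

/-- The (strict) preference `pr` of school `s` over sets of students is a responsive
extension of its priorities. -/
def Responsive (E : Prio I S) (s : S) (pr : Finset I → Finset I → Prop) : Prop :=
  ∀ (J : Finset I) (i j : I), i ∉ J → j ∉ J → E.higher s i j →
    pr (insert i J) (insert j J)

/-- `t` is a refinement of `t'`: `t'` ranks `a` in a strictly later tier than `b` only
if `t` does. -/
def Refines (t t' : S → ℕ) : Prop :=
  ∀ a b : S, t' b < t' a → t b < t a

/-!
With one school per tier, round `t s` of TDA is a market with the single school `s`, so `s`
admits the top `quota s` of the still unmatched students who list it. A student who blocks the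
TDA outcome at `s` could therefore obtain `s` by listing `s` alone: Nash equilibrium outcomes
are stable. For a stable `μ` and the student-optimal stable `ν`, a student of `ν(s) \ μ(s)`
prefers `s` to his `μ`-school, so `μ(s)` is full and all of it has higher priority at `s` than
him. Counting matched students gives `|ν(s)| = |μ(s)|`, and responsiveness,
applied one swap at a time, makes `μ(s)` weakly better for `s`.
-/

open Finset

lemma mem_assigned {μ : Matching I S} {s : S} {i : I} : i ∈ assigned μ s ↔ μ i = some s := by
  simp [assigned]

namespace Pref

def Acceptable (p : Pref S) (s : S) : Prop :=
  p.rank (some s) < p.rank none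

instance (p : Pref S) (s : S) : Decidable (p.Acceptable s) :=
  inferInstanceAs (Decidable (_ < _))

lemma rank_lt_of_le_of_ne (p : Pref S) {x y : Option S} (h : p.rank x ≤ p.rank y)
    (hne : x ≠ y) : p.rank x < p.rank y :=
  lt_of_le_of_ne h (p.inj.ne hne)

lemma acceptable_trunc {A : S → Prop} [DecidablePred A] {p : Pref S} {s : S} :
    (trunc A p).Acceptable s ↔ A s ∧ p.Acceptable s := by
  by_cases h : A s
  · simp [Acceptable, trunc, goodB, h]
  · simp only [Acceptable, trunc, goodB, h, decide_false, Bool.false_eq_true, ↓reduceIte,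
      zero_add, false_and, iff_false, not_lt]
    exact (rank_lt_bnd p none).le.trans (Nat.le_add_right _ _)

noncomputable def only (p : Pref S) (o : Option S) : Pref S where
  rank x := if x = o then 0 else if x = none then 1 else p.rank x + 2
  inj x y h := by
    dsimp only at h
    split_ifs at h <;> first | (subst_vars; rfl) | omega | exact p.inj (by omega)

lemma onlyAcceptable_only (p : Pref S) (o : Option S) : OnlyAcceptable (p.only o) o := by
  intro s
  rcases o with _ | s₀
  · simp [only]
  · by_cases h : s = s₀ <;> simp [only, h, eq_comm]

end Pref

lemma Stable.acceptable_of_eq_some {E : Prio I S} {R : I → Pref S} {μ : Matching I S}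
    (hμ : Stable E R μ) {i : I} {s : S} (h : μ i = some s) : (R i).Acceptable s :=
  (R i).rank_lt_of_le_of_ne (h ▸ hμ.2.1 i) (by simp)

namespace Prio

instance (E : Prio I S) (s : S) (i j : I) : Decidable (E.higher s i j) :=
  inferInstanceAs (Decidable (_ < _))

variable (E : Prio I S) (s : S)

def numAbove (A : Finset I) (i : I) : ℕ :=
  #(A.filter (E.higher s · i))

def kept (A : Finset I) : Finset I :=
  A.filter (E.numAbove s A · < E.quota s)

variable {E s} {A A' : Finset I} {i j l : I}

lemma higher_irrefl (i : I) : ¬ E.higher s i i := lt_irrefl _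

lemma higher_trans : E.higher s i j → E.higher s j l → E.higher s i l := lt_trans

lemma higher_or_higher_of_ne (h : i ≠ j) : E.higher s i j ∨ E.higher s j i :=
  lt_or_gt_of_ne ((E.inj s).ne h)

lemma mem_kept : i ∈ E.kept s A ↔ i ∈ A ∧ E.numAbove s A i < E.quota s := mem_filter

lemma kept_subset : E.kept s A ⊆ A := filter_subset _ _

lemma numAbove_le_card : E.numAbove s A i ≤ #A := card_filter_le _ _

lemma numAbove_mono (h : A' ⊆ A) : E.numAbove s A' i ≤ E.numAbove s A i :=
  card_le_card (filter_subset_filter _ h)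

lemma numAbove_insert_self : E.numAbove s (insert i A) i = E.numAbove s A i := by
  simp [numAbove, filter_insert, higher_irrefl]

lemma numAbove_le_of_higher (h : E.higher s j i) : E.numAbove s A j ≤ E.numAbove s A i :=
  card_le_card (monotone_filter_right _ fun _ _ hl => higher_trans hl h)

lemma numAbove_lt_of_higher (hj : j ∈ A) (h : E.higher s j i) :
    E.numAbove s A j < E.numAbove s A i := by
  refine card_lt_card ((ssubset_iff_of_subset ?_).mpr ⟨j, ?_, ?_⟩)
  · exact monotone_filter_right _ fun _ _ hl => higher_trans hl h
  · exact mem_filter.mpr ⟨hj, h⟩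
  · simp [higher_irrefl]

lemma numAbove_lt_card (hi : i ∈ A) : E.numAbove s A i < #A :=
  card_lt_card (filter_ssubset.mpr ⟨i, hi, higher_irrefl i⟩)

lemma numAbove_injOn : Set.InjOn (E.numAbove s A) (A : Set I) := by
  intro i hi j hj hij
  by_contra hne
  rcases higher_or_higher_of_ne (E := E) (s := s) hne with h | h
  · exact (numAbove_lt_of_higher hi h).ne hij
  · exact (numAbove_lt_of_higher hj h).ne' hij

lemma image_numAbove : A.image (E.numAbove s A) = range #A := by
  refine eq_of_subset_of_card_le (fun n hn => ?_) ?_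
  · obtain ⟨i, hi, rfl⟩ := mem_image.mp hn
    exact mem_range.mpr (numAbove_lt_card hi)
  · rw [card_range, card_image_of_injOn numAbove_injOn]

lemma card_kept : #(E.kept s A) = min (E.quota s) #A := by
  rw [← card_image_of_injOn
      ((numAbove_injOn (E := E) (s := s)).mono (coe_subset.mpr kept_subset)),
    kept, ← filter_image (p := (· < E.quota s)), image_numAbove,
    show (range #A).filter (· < E.quota s) = range (min (E.quota s) #A) by ext; simp [and_comm]]
  exact card_range _

lemma card_kept_le : #(E.kept s A) ≤ E.quota s :=
  card_kept.trans_le (min_le_left _ _)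

lemma quota_le_numAbove (hi : i ∈ A) (hk : i ∉ E.kept s A) : E.quota s ≤ E.numAbove s A i :=
  not_lt.mp fun h => hk (mem_kept.mpr ⟨hi, h⟩)

lemma card_kept_of_quota_le (hi : E.quota s ≤ E.numAbove s A i) : #(E.kept s A) = E.quota s := by
  rw [card_kept, min_eq_left (hi.trans numAbove_le_card)]

lemma higher_of_mem_kept (hl : l ∈ E.kept s A) (hi : E.quota s ≤ E.numAbove s A i) :
    E.higher s l i := by
  have hlq := (mem_kept.mp hl).2
  rcases eq_or_ne l i with rfl | hne
  · omega
  · refine (higher_or_higher_of_ne hne).resolve_right fun hil => ?_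
    have := numAbove_le_of_higher (A := A) hil
    omega

lemma mem_kept_of_subset (hA : A' ⊆ A) (hj : j ∈ A') (hk : j ∈ E.kept s A) :
    j ∈ E.kept s A' :=
  mem_kept.mpr ⟨hj, (numAbove_mono hA).trans_lt (mem_kept.mp hk).2⟩

/-- If `μ` hands `s` its choice from `A`, a student who could block `μ` at `s` ranks among the
top `E.quota s` of `A`. -/
lemma numAbove_lt_quota {μ : Matching I S} (hμ : assigned μ s = E.kept s A)
    (h : #(assigned μ s) < E.quota s ∨ ∃ j, μ j = some s ∧ E.higher s i j) :
    E.numAbove s A i < E.quota s := by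
  rcases h with h | ⟨j, hj, hij⟩
  · rw [hμ, card_kept] at h
    exact numAbove_le_card.trans_lt (by omega)
  · rw [← mem_assigned, hμ] at hj
    exact (numAbove_le_of_higher hij).trans_lt (mem_kept.mp hj).2

end Prio

namespace Pref

noncomputable def bestOutside (p : Pref S) (D : Finset S) : Option S :=
  ((univ.filter fun x : Option S => ∀ s ∈ x, s ∉ D).exists_min_image p.rank
    ⟨none, by simp⟩).choose

lemma bestOutside_spec (p : Pref S) (D : Finset S) :
    (∀ s ∈ p.bestOutside D, s ∉ D) ∧
      ∀ x : Option S, (∀ s ∈ x, s ∉ D) → p.rank (p.bestOutside D) ≤ p.rank x := by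
  obtain ⟨hmem, hmin⟩ :=
    ((univ.filter fun x : Option S => ∀ s ∈ x, s ∉ D).exists_min_image p.rank
      ⟨none, by simp⟩).choose_spec
  exact ⟨(mem_filter.mp hmem).2, fun x hx => hmin x (mem_filter.mpr ⟨mem_univ x, hx⟩)⟩

lemma not_mem_of_bestOutside_eq_some {p : Pref S} {D : Finset S} {s : S}
    (h : p.bestOutside D = some s) : s ∉ D :=
  (p.bestOutside_spec D).1 s (h ▸ rfl)

lemma rank_bestOutside_le {p : Pref S} {D : Finset S} {x : Option S} (hx : ∀ s ∈ x, s ∉ D) :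
    p.rank (p.bestOutside D) ≤ p.rank x :=
  (p.bestOutside_spec D).2 x hx

end Pref

section DeferredAcceptance

variable (E : Prio I S) (R : I → Pref S)

/-! A state of deferred acceptance is `D : I → Finset S`, the schools that have rejected each
student so far; each student applies to his best school outside `D i`. -/

noncomputable def applicants (D : I → Finset S) (s : S) : Finset I :=
  univ.filter fun i => (R i).bestOutside (D i) = some s

noncomputable def reject (D : I → Finset S) : I → Finset S := fun i =>
  D i ∪ univ.filter fun s =>
    (R i).bestOutside (D i) = some s ∧ i ∉ E.kept s (applicants R D s)

def RejectionsJustified (D : I → Finset S) : Prop :=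
  ∀ i s, s ∈ D i → E.quota s ≤ E.numAbove s (applicants R D s) i

def RejectionsSafe (D : I → Finset S) : Prop :=
  ∀ ν, Stable E R ν → ∀ i, ∀ s ∈ ν i, s ∉ D i

variable {E R} {D : I → Finset S}

lemma mem_applicants {i : I} {s : S} :
    i ∈ applicants R D s ↔ (R i).bestOutside (D i) = some s := by
  simp [applicants]

lemma mem_reject {i : I} {s : S} :
    s ∈ reject E R D i ↔
      s ∈ D i ∨ ((R i).bestOutside (D i) = some s ∧ i ∉ E.kept s (applicants R D s)) := by
  simp [reject]

lemma le_reject : D ≤ reject E R D := fun _ => subset_union_left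

lemma reject_eq_of_mem_kept {j : I} {s : S} (hk : j ∈ E.kept s (applicants R D s)) :
    reject E R D j = D j := by
  have hbest : (R j).bestOutside (D j) = some s := mem_applicants.mp (Prio.kept_subset hk)
  refine (Finset.Subset.antisymm (fun s' hs' => ?_) (le_reject j))
  rcases mem_reject.mp hs' with h | ⟨hb, hnk⟩
  · exact h
  · obtain rfl : s = s' := Option.some_injective _ (hbest.symm.trans hb)
    exact absurd hk hnk

lemma kept_subset_applicants_reject {s : S} :
    E.kept s (applicants R D s) ⊆ applicants R (reject E R D) s := fun j hj => by
  simpa [applicants, reject_eq_of_mem_kept hj] using Prio.kept_subset hj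

lemma RejectionsJustified.reject (hD : RejectionsJustified E R D) :
    RejectionsJustified E R (reject E R D) := by
  intro i s hs
  have hq : E.quota s ≤ E.numAbove s (applicants R D s) i := by
    rcases mem_reject.mp hs with h | ⟨hb, hnk⟩
    · exact hD i s h
    · exact Prio.quota_le_numAbove (mem_applicants.mpr hb) hnk
  rw [← Prio.card_kept_of_quota_le hq]
  exact card_le_card fun j hj =>
    mem_filter.mpr ⟨kept_subset_applicants_reject hj, Prio.higher_of_mem_kept hj hq⟩

lemma RejectionsSafe.rank_le (hD : RejectionsSafe E R D) {ν : Matching I S}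
    (hν : Stable E R ν) (j : I) : (R j).rank ((R j).bestOutside (D j)) ≤ (R j).rank (ν j) :=
  Pref.rank_bestOutside_le (hD ν hν j)

lemma RejectionsSafe.reject (hD : RejectionsSafe E R D) : RejectionsSafe E R (reject E R D) := by
  intro ν hν i s hi hrej
  rw [Option.mem_def] at hi
  rcases mem_reject.mp hrej with hold | ⟨hbest, hnk⟩
  · exact hD ν hν i s hi hold
  have hq := Prio.quota_le_numAbove (mem_applicants.mpr hbest) hnk
  have hiν : i ∈ assigned ν s := mem_assigned.mpr hi
  -- `s` keeps `quota s` students above `i`, so one of them is not at `s` under `ν`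
  obtain ⟨j, hjk, hjν⟩ :
      ∃ j ∈ E.kept s (applicants R D s), j ∉ (assigned ν s).erase i := by
    refine exists_mem_notMem_of_card_lt_card ?_
    rw [Prio.card_kept_of_quota_le hq, card_erase_of_mem hiν]
    have := hν.1 s
    have := card_pos.mpr ⟨i, hiν⟩
    omega
  have hjs : ν j ≠ some s := fun h =>
    hjν (mem_erase.mpr ⟨fun hji => hnk (hji ▸ hjk), mem_assigned.mpr h⟩)
  have hbj : (R j).bestOutside (D j) = some s := mem_applicants.mp (Prio.kept_subset hjk)
  have hpref : (R j).rank (some s) < (R j).rank (ν j) :=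
    (R j).rank_lt_of_le_of_ne (hbj ▸ hD.rank_le hν j) hjs.symm
  exact hν.2.2 j s ⟨hpref, Or.inr ⟨i, hi, Prio.higher_of_mem_kept hjk hq⟩⟩

lemma exists_reject_eq :
    ∃ D, RejectionsJustified E R D ∧ RejectionsSafe E R D ∧ reject E R D = D := by
  obtain ⟨D, ⟨hJ, hS⟩, hmax⟩ :=
    Set.Finite.exists_maximal (s := {D | RejectionsJustified E R D ∧ RejectionsSafe E R D})
      (Set.toFinite _) ⟨fun _ => ∅, fun _ _ h => absurd h (notMem_empty _),
        fun _ _ _ _ _ h => absurd h (notMem_empty _)⟩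
  exact ⟨D, hJ, hS, le_antisymm (hmax ⟨hJ.reject, hS.reject⟩ le_reject) le_reject⟩

variable (E R)

theorem exists_studentOptimal : ∃ μ, StudentOptimal E R μ := by
  obtain ⟨D, hJ, hS, hfix⟩ := exists_reject_eq (E := E) (R := R)
  set μ : Matching I S := fun i => (R i).bestOutside (D i)
  have hkept : ∀ s, assigned μ s = E.kept s (applicants R D s) := by
    intro s
    refine Subset.antisymm (fun i hi => ?_) Prio.kept_subset
    have hb : μ i = some s := mem_assigned.mp hi
    by_contra hnk
    exact Pref.not_mem_of_bestOutside_eq_some hb (hfix ▸ mem_reject.mpr (Or.inr ⟨hb, hnk⟩))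
  refine ⟨μ, ⟨fun s => hkept s ▸ Prio.card_kept_le,
    fun i => Pref.rank_bestOutside_le (by simp), fun i s ⟨hpref, hblock⟩ => ?_⟩,
    fun ν hν => hS.rank_le hν⟩
  have hsD : s ∈ D i := by_contra fun hs =>
    absurd (Pref.rank_bestOutside_le (x := some s) (by simpa using hs)) (not_le.mpr hpref)
  exact absurd (hJ i s hsD) (not_le.mpr (Prio.numAbove_lt_quota (hkept s) hblock))

theorem DA_studentOptimal : StudentOptimal E R (DA E R) := by
  rw [DA, dif_pos (exists_studentOptimal E R)]
  exact (exists_studentOptimal E R).choose_spec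

end DeferredAcceptance

def demand (R : I → Pref S) (μ : Matching I S) (s : S) : Finset I :=
  univ.filter fun i => (R i).rank (some s) ≤ (R i).rank (μ i)

section Stability

variable {E : Prio I S} {R : I → Pref S} {μ : Matching I S}

lemma mem_demand {s : S} {i : I} :
    i ∈ demand R μ s ↔ (R i).rank (some s) ≤ (R i).rank (μ i) := by
  simp [demand]

theorem Stable.assigned_eq_kept (hμ : Stable E R μ) (s : S) :
    assigned μ s = E.kept s (demand R μ s) := by
  ext i
  rw [Prio.mem_kept]
  constructor
  · intro hi
    have hiD : i ∈ demand R μ s := mem_demand.mpr (by rw [mem_assigned.mp hi])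
    refine ⟨hiD, not_le.mp fun hq => ?_⟩
    -- `quota s` students of the demand rank above `i`, so one of them envies `i`
    obtain ⟨l, hl, hlμ⟩ :
        ∃ l ∈ (demand R μ s).filter (E.higher s · i), l ∉ (assigned μ s).erase i := by
      refine exists_mem_notMem_of_card_lt_card ?_
      have := hμ.1 s
      have := card_pos.mpr ⟨i, hi⟩
      rw [card_erase_of_mem hi]
      exact lt_of_lt_of_le (by omega) hq
    obtain ⟨hlD, hli⟩ := mem_filter.mp hl
    have hls : μ l ≠ some s := fun h =>
      hlμ (mem_erase.mpr ⟨by rintro rfl; exact Prio.higher_irrefl l hli, mem_assigned.mpr h⟩)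
    exact hμ.2.2 l s ⟨(R l).rank_lt_of_le_of_ne (mem_demand.mp hlD) hls.symm,
      Or.inr ⟨i, mem_assigned.mp hi, hli⟩⟩
  · rintro ⟨hiD, hlt⟩
    by_contra hi
    have hpref : (R i).rank (some s) < (R i).rank (μ i) :=
      (R i).rank_lt_of_le_of_ne (mem_demand.mp hiD) fun h => hi (mem_assigned.mpr h.symm)
    have hnb := hμ.2.2 i s
    simp only [Blocks, hpref, true_and, not_or, not_exists, not_and, not_lt] at hnb
    have hsub : assigned μ s ⊆ (demand R μ s).filter (E.higher s · i) := fun j hj => by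
      have hji : j ≠ i := fun h => hi (h ▸ hj)
      refine mem_filter.mpr ⟨mem_demand.mpr ?_,
        (Prio.higher_or_higher_of_ne hji).resolve_right (hnb.2 j (mem_assigned.mp hj))⟩
      rw [mem_assigned.mp hj]
    exact absurd (hnb.1.trans (card_le_card hsub)) (not_le.mpr hlt)

lemma Stable.assigned_eq_kept_of_acceptable (hμ : Stable E R μ) {s : S}
    (hacc : ∀ j s', (R j).Acceptable s' → s' = s) :
    assigned μ s = E.kept s (univ.filter fun j => (R j).Acceptable s) := by
  rw [hμ.assigned_eq_kept]
  congr 1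
  ext j
  rw [mem_demand, mem_filter, and_iff_right (mem_univ j)]
  rcases hj : μ j with _ | s'
  · exact ⟨fun h => (R j).rank_lt_of_le_of_ne h (by simp), le_of_lt⟩
  · obtain rfl := hacc j s' (hμ.acceptable_of_eq_some hj)
    exact ⟨fun _ => hμ.acceptable_of_eq_some hj, fun _ => le_rfl⟩

end Stability

section TieredDeferredAcceptance

variable {E : Prio I S} {t : S → ℕ} {Q : I → Pref S} {k : ℕ} {i j : I} {s : S}

variable (E t Q) in
/-- The reports used in round `k + 1` of TDA. -/
noncomputable def roundProfile (k : ℕ) : I → Pref S := fun j =>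
  if TDAaux E t Q k j = none then trunc (fun s => t s = k + 1) (Q j)
  else trunc (fun _ => False) (Q j)

variable (E t Q) in
noncomputable def tdaApplicants (k : ℕ) (s : S) : Finset I :=
  univ.filter fun j => TDAaux E t Q k j = none ∧ (Q j).Acceptable s

lemma mem_tdaApplicants :
    j ∈ tdaApplicants E t Q k s ↔ TDAaux E t Q k j = none ∧ (Q j).Acceptable s := by
  simp [tdaApplicants]

lemma TDAaux_succ_of_eq_some (h : TDAaux E t Q k i = some s) :
    TDAaux E t Q (k + 1) i = some s := by
  simp only [TDAaux, h]

lemma TDAaux_succ_of_eq_none (h : TDAaux E t Q k i = none) :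
    TDAaux E t Q (k + 1) i = DA E (roundProfile E t Q k) i := by
  simp only [TDAaux, h]
  rfl

lemma acceptable_roundProfile :
    (roundProfile E t Q k j).Acceptable s ↔
      TDAaux E t Q k j = none ∧ t s = k + 1 ∧ (Q j).Acceptable s := by
  unfold roundProfile
  split_ifs with h <;> simp [Pref.acceptable_trunc, h]

lemma TDAaux_succ_eq_some_iff (hone : Function.Injective t) (h : TDAaux E t Q k i = none) :
    TDAaux E t Q (k + 1) i = some s ↔
      t s = k + 1 ∧ i ∈ E.kept s (tdaApplicants E t Q k s) := by
  have hDA := (DA_studentOptimal E (roundProfile E t Q k)).1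
  rw [TDAaux_succ_of_eq_none h, ← mem_assigned]
  by_cases hts : t s = k + 1
  · have hacc : ∀ j s', (roundProfile E t Q k j).Acceptable s' → s' = s := fun j s' h' =>
      hone ((acceptable_roundProfile.mp h').2.1.trans hts.symm)
    rw [hDA.assigned_eq_kept_of_acceptable hacc]
    simp only [acceptable_roundProfile, hts, true_and, tdaApplicants]
  · refine iff_of_false (fun hi => hts ?_) (fun h' => hts h'.1)
    exact (acceptable_roundProfile.mp (hDA.acceptable_of_eq_some (mem_assigned.mp hi))).2.1

theorem TDAaux_eq_some_iff (ht1 : ∀ s, 1 ≤ t s) (hone : Function.Injective t) :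
    TDAaux E t Q k i = some s ↔
      t s ≤ k ∧ i ∈ E.kept s (tdaApplicants E t Q (t s - 1) s) := by
  induction k with
  | zero =>
    have := ht1 s
    exact iff_of_false (by simp [TDAaux]) (by omega)
  | succ k ih =>
    rcases h : TDAaux E t Q k i with _ | s'
    · rw [TDAaux_succ_eq_some_iff hone h]
      constructor
      · rintro ⟨hts, hk⟩
        exact ⟨hts.le, by rwa [hts]⟩
      · rintro ⟨hts, hk⟩
        have hts' : t s = k + 1 := by
          by_contra hne
          simpa [h] using ih.mpr ⟨by omega, hk⟩
        exact ⟨hts', by rwa [hts'] at hk⟩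
    · rw [TDAaux_succ_of_eq_some h, ← h, ih]
      refine ⟨fun ⟨hts, hk⟩ => ⟨by omega, hk⟩, fun ⟨hts, hk⟩ => ⟨?_, hk⟩⟩
      by_contra hlt
      have := (mem_tdaApplicants.mp (Prio.kept_subset hk)).1
      rw [show t s - 1 = k by omega, h] at this
      exact Option.some_ne_none _ this

lemma assigned_TDA (ht1 : ∀ s, 1 ≤ t s) (hone : Function.Injective t) (s : S) :
    assigned (TDA E t Q) s = E.kept s (tdaApplicants E t Q (t s - 1) s) := by
  ext i
  rw [mem_assigned, TDA, TDAaux_eq_some_iff ht1 hone,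
    and_iff_right (le_sup (f := t) (mem_univ s))]

lemma acceptable_of_TDAaux_eq_some (ht1 : ∀ s, 1 ≤ t s) (hone : Function.Injective t)
    (h : TDAaux E t Q k i = some s) : t s ≤ k ∧ (Q i).Acceptable s := by
  obtain ⟨hts, hk⟩ := (TDAaux_eq_some_iff ht1 hone).mp h
  exact ⟨hts, (mem_tdaApplicants.mp (Prio.kept_subset hk)).2⟩

end TieredDeferredAcceptance

section Deviation

open Function

variable {E : Prio I S} {t : S → ℕ} {Q : I → Pref S} {p : Pref S} {k : ℕ} {i j : I} {s : S}

/-- If `i` switches to a report accepting no school of the first `k` tiers, he frees seats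
there: nobody else who was matched within `k` rounds becomes unmatched. -/
lemma TDAaux_eq_none_of_update (hone : Function.Injective t)
    (hp : ∀ s, p.Acceptable s → k < t s) (hji : j ≠ i)
    (hj : TDAaux E t (update Q i p) k j = none) : TDAaux E t Q k j = none := by
  induction k generalizing j with
  | zero => rfl
  | succ k ih =>
    have hp' : ∀ s, p.Acceptable s → k < t s := fun s hs => by have := hp s hs; omega
    have hjk : TDAaux E t (update Q i p) k j = none := by
      rcases h : TDAaux E t (update Q i p) k j with _ | s
      · rfl
      · simp [TDAaux_succ_of_eq_some h] at hj
    rcases h : TDAaux E t Q (k + 1) j with _ | s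
    · rfl
    obtain ⟨hts, hk⟩ := (TDAaux_succ_eq_some_iff hone (ih hp' hji hjk)).mp h
    have hsub : tdaApplicants E t (update Q i p) k s ⊆ tdaApplicants E t Q k s := fun l hl => by
      obtain ⟨hl, hacc⟩ := mem_tdaApplicants.mp hl
      have hli : l ≠ i := by
        rintro rfl
        rw [update_self] at hacc
        have := hp s hacc
        omega
      rw [update_of_ne hli] at hacc
      exact mem_tdaApplicants.mpr ⟨ih hp' hli hl, hacc⟩
    have hjA : j ∈ tdaApplicants E t (update Q i p) k s := by
      rw [mem_tdaApplicants, update_of_ne hji]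
      exact ⟨hjk, (mem_tdaApplicants.mp (Prio.kept_subset hk)).2⟩
    have := (TDAaux_succ_eq_some_iff hone hjk).mpr ⟨hts, Prio.mem_kept_of_subset hsub hjA hk⟩
    simp [hj] at this

lemma tdaApplicants_update_subset (hone : Function.Injective t)
    (hp : ∀ s, p.Acceptable s → k < t s) :
    tdaApplicants E t (update Q i p) k s ⊆ insert i (tdaApplicants E t Q k s) := by
  intro l hl
  rcases eq_or_ne l i with rfl | hli
  · exact mem_insert_self _ _
  obtain ⟨hl, hacc⟩ := mem_tdaApplicants.mp hl
  rw [update_of_ne hli] at hacc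
  exact mem_insert_of_mem
    (mem_tdaApplicants.mpr ⟨TDAaux_eq_none_of_update hone hp hli hl, hacc⟩)

lemma TDA_update_only_none (ht1 : ∀ s, 1 ≤ t s) (hone : Function.Injective t) :
    TDA E t (update Q i (p.only none)) i = none := by
  rcases h : TDA E t (update Q i (p.only none)) i with _ | s
  · rfl
  · have := (acceptable_of_TDAaux_eq_some ht1 hone h).2
    rw [update_self] at this
    exact absurd ((p.onlyAcceptable_only none s).mp this) (Option.some_ne_none s).symm

lemma TDA_update_only_some (ht1 : ∀ s, 1 ≤ t s) (hone : Function.Injective t)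
    (h : #(assigned (TDA E t Q) s) < E.quota s ∨ ∃ j, TDA E t Q j = some s ∧ E.higher s i j) :
    TDA E t (update Q i (p.only (some s))) i = some s := by
  have hpos := ht1 s
  have hp : ∀ s', (p.only (some s)).Acceptable s' → t s - 1 < t s' := fun s' hs' => by
    obtain rfl := Option.some_injective _ ((p.onlyAcceptable_only (some s) s').mp hs')
    omega
  have hi : i ∈ tdaApplicants E t (update Q i (p.only (some s))) (t s - 1) s := by
    refine mem_tdaApplicants.mpr
      ⟨?_, by rw [update_self]; exact (p.onlyAcceptable_only _ s).mpr rfl⟩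
    rcases hs : TDAaux E t (update Q i (p.only (some s))) (t s - 1) i with _ | s'
    · rfl
    · obtain ⟨hts', hacc⟩ := acceptable_of_TDAaux_eq_some ht1 hone hs
      rw [update_self] at hacc
      have := hp s' hacc
      omega
  have hlt := Prio.numAbove_lt_quota (assigned_TDA ht1 hone s) h
  rw [← mem_assigned, assigned_TDA ht1 hone]
  refine Prio.mem_kept.mpr ⟨hi, lt_of_le_of_lt ?_ hlt⟩
  exact (Prio.numAbove_mono (tdaApplicants_update_subset hone hp)).trans_eq
    Prio.numAbove_insert_self

theorem NashEq.stable_TDA (ht1 : ∀ s, 1 ≤ t s) (hone : Function.Injective t) {R : I → Pref S}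
    (hNE : NashEq R (TDA E t) Q) : Stable E R (TDA E t Q) := by
  refine ⟨fun s => ?_, fun i => ?_, fun i s ⟨hpref, hblock⟩ => ?_⟩
  · rw [assigned_TDA ht1 hone]
    exact Prio.card_kept_le
  · simpa [TDA_update_only_none ht1 hone] using hNE i ((R i).only none)
  · have := hNE i ((R i).only (some s))
    rw [TDA_update_only_some ht1 hone hblock] at this
    omega

end Deviation

lemma card_unmatched_add_sum_card_assigned (μ : Matching I S) :
    #(univ.filter fun i => μ i = none) + ∑ s, #(assigned μ s) = Fintype.card I := by
  rw [← card_univ,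
    card_eq_sum_card_fiberwise (f := μ) (s := univ) (t := univ) fun _ _ => mem_univ _,
    Fintype.sum_option]
  rfl

/-- Responsiveness: trading, one at a time, the students of `B \ A` for the higher-priority
students of `A \ B` makes `B` better at every step. -/
lemma Responsive.eq_or_pr {E : Prio I S} {s : S} {pr : Finset I → Finset I → Prop}
    (hresp : Responsive E s pr) (htrans : IsTrans (Finset I) pr) {A B : Finset I}
    (hcard : #A = #B) (hdom : ∀ i ∈ A \ B, ∀ j ∈ B \ A, E.higher s i j) :
    A = B ∨ pr A B := by
  induction hn : #(B \ A) using Nat.strong_induction_on generalizing B with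
  | _ n ih =>
  obtain hBA | ⟨j, hj⟩ := (B \ A).eq_empty_or_nonempty
  · exact Or.inl (eq_of_subset_of_card_le (sdiff_eq_empty_iff_subset.mp hBA) hcard.le).symm
  obtain ⟨i, hi⟩ : (A \ B).Nonempty := by
    rw [← card_pos, card_sdiff_comm hcard]
    exact card_pos.mpr ⟨j, hj⟩
  obtain ⟨hjB, hjA⟩ := mem_sdiff.mp hj
  obtain ⟨hiA, hiB⟩ := mem_sdiff.mp hi
  have hiJ : i ∉ B.erase j := fun h => hiB (mem_of_mem_erase h)
  have hswap : pr (insert i (B.erase j)) B := by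
    simpa [insert_erase hjB] using
      hresp (B.erase j) i j hiJ (notMem_erase j B) (hdom i hi j hj)
  have hsdiff : insert i (B.erase j) \ A = (B \ A).erase j := by
    ext x
    simp only [mem_sdiff, mem_insert, mem_erase]
    constructor
    · rintro ⟨rfl | h, hxA⟩
      · exact absurd hiA hxA
      · exact ⟨h.1, h.2, hxA⟩
    · rintro ⟨hxj, hxB, hxA⟩
      exact ⟨Or.inr ⟨hxj, hxB⟩, hxA⟩
  have hdom' : ∀ i' ∈ A \ insert i (B.erase j), ∀ j' ∈ insert i (B.erase j) \ A,
      E.higher s i' j' := by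
    intro i' hi' j' hj'
    obtain ⟨hi'A, hi'B'⟩ := mem_sdiff.mp hi'
    refine hdom i' (mem_sdiff.mpr ⟨hi'A, fun hi'B => hi'B' ?_⟩) j'
      (mem_erase.mp (hsdiff ▸ hj')).2
    exact mem_insert_of_mem (mem_erase.mpr ⟨by rintro rfl; exact hjA hi'A, hi'B⟩)
  rcases ih _ (hn ▸ hsdiff ▸ card_erase_lt_of_mem hj) (B := insert i (B.erase j))
    (by rw [card_insert_of_notMem hiJ, card_erase_add_one hjB, hcard]) hdom' rfl with h | h
  · exact Or.inr (h ▸ hswap)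
  · exact Or.inr (htrans.trans _ _ _ h hswap)

section SchoolPessimality

variable {E : Prio I S} {R : I → Pref S} {μ ν : Matching I S} {s : S}

lemma StudentOptimal.quota_le_numAbove (hν : StudentOptimal E R ν) (hμ : Stable E R μ) {j : I}
    (hjν : j ∈ assigned ν s) (hjμ : j ∉ assigned μ s) :
    E.quota s ≤ E.numAbove s (demand R μ s) j := by
  rw [hμ.assigned_eq_kept] at hjμ
  refine Prio.quota_le_numAbove (mem_demand.mpr ?_) hjμ
  rw [← mem_assigned.mp hjν]
  exact hν.2 μ hμ j

lemma StudentOptimal.card_assigned_le (hν : StudentOptimal E R ν) (hμ : Stable E R μ) (s : S) :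
    #(assigned ν s) ≤ #(assigned μ s) := by
  by_cases hsub : assigned ν s ⊆ assigned μ s
  · exact card_le_card hsub
  obtain ⟨j, hjν, hjμ⟩ := not_subset.mp hsub
  rw [hμ.assigned_eq_kept, Prio.card_kept_of_quota_le (hν.quota_le_numAbove hμ hjν hjμ)]
  exact hν.1.1 s

lemma StudentOptimal.card_assigned_eq (hν : StudentOptimal E R ν) (hμ : Stable E R μ) (s : S) :
    #(assigned ν s) = #(assigned μ s) := by
  have hunmatched : univ.filter (ν · = none) ⊆ univ.filter (μ · = none) := fun i hi => by
    have hle := hν.2 μ hμ i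
    rw [(mem_filter.mp hi).2] at hle
    exact mem_filter.mpr ⟨mem_univ i, (R i).inj (le_antisymm (hμ.2.1 i) hle)⟩
  have hsum : ∑ s, #(assigned μ s) ≤ ∑ s, #(assigned ν s) := by
    have := card_le_card hunmatched
    have := card_unmatched_add_sum_card_assigned μ
    have := card_unmatched_add_sum_card_assigned ν
    omega
  have hle : ∀ s ∈ univ, #(assigned ν s) ≤ #(assigned μ s) := fun s _ =>
    hν.card_assigned_le hμ s
  exact (sum_eq_sum_iff_of_le hle).mp ((sum_le_sum hle).antisymm hsum) s (mem_univ s)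

lemma StudentOptimal.higher_of_mem_assigned (hν : StudentOptimal E R ν) (hμ : Stable E R μ)
    {i j : I} (hi : i ∈ assigned μ s) (hjν : j ∈ assigned ν s) (hjμ : j ∉ assigned μ s) :
    E.higher s i j :=
  Prio.higher_of_mem_kept (hμ.assigned_eq_kept s ▸ hi) (hν.quota_le_numAbove hμ hjν hjμ)

theorem StudentOptimal.not_pr_assigned (hν : StudentOptimal E R ν) (hμ : Stable E R μ)
    {pr : Finset I → Finset I → Prop} (hpr : IsStrictTotalOrder (Finset I) pr)
    (hresp : Responsive E s pr) : ¬ pr (assigned ν s) (assigned μ s) := by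
  rcases hresp.eq_or_pr hpr.toIsTrans (hν.card_assigned_eq hμ s).symm
    (fun i hi j hj => hν.higher_of_mem_assigned hμ (mem_sdiff.mp hi).1 (mem_sdiff.mp hj).1
      (mem_sdiff.mp hj).2) with h | h
  · exact h ▸ hpr.irrefl _
  · have := hpr
    exact asymm h

end SchoolPessimality

/-- If the tier structure places exactly one school per tier, then every
school weakly prefers (under any responsive extension of its priorities) every Nash
equilibrium outcome of the TDA mechanism to the student-optimal stable matching `DA E R`. -/
theorem finest_TDA_schools_weakly_better
    (E : Prio I S) (t : S → ℕ) (T : ℕ) (ht : IsTierStructure t T)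
    (hone : Function.Injective t)
    (R : I → Pref S) (μ : Matching I S) (hμ : NashOutcome R (TDA E t) μ)
    (s : S) (pr : Finset I → Finset I → Prop)
    (hpr : IsStrictTotalOrder (Finset I) pr) (hresp : Responsive E s pr) :
    ¬ pr (assigned (DA E R) s) (assigned μ s) := by
  obtain ⟨Q, hNE, rfl⟩ := hμ
  exact (DA_studentOptimal E R).not_pr_assigned (hNE.stable_TDA (fun s => (ht.1 s).1) hone)
    hpr hresp

end SchoolChoice
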